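/- arXiv:1104.1097 — 6 statements merged into one kernel-verified Lean document; each statement's English description precedes it below -/
import Mathlib

section
/- Let n > 1 and let D = {d_1, ..., d_k} be a set of proper divisors of n with gcd(d_1, ..., d_k) = 1 (so that ICG_n(D) is connected). If a and b are vertices of ICG_n(D) with gcd(a, n) = gcd(b, n), then the graph distance from vertex 0 to a equals the graph distance from vertex 0 to b. Consequently, for every p ≥ 1 the set N_p(0) of vertices at distance p from 0 is a union of sets G_n(d) = {k : 1 ≤ k < n, gcd(k, n) = d} over some set of divisors d of n. -/
open scoped Classical

/-- The integral circulant graph `ICG_n(D)`: vertices `0,…,n-1` (as `ZMod n`), with `a ~ b` iff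
`gcd(a-b, n) ∈ D`. -/
def ICG (n : ℕ) (D : Finset ℕ) : SimpleGraph (ZMod n) where
  Adj a b := a ≠ b ∧ Int.gcd ((a.val : ℤ) - (b.val : ℤ)) n ∈ D
  symm := by
    constructor
    rintro a b ⟨hne, h⟩
    refine ⟨hne.symm, ?_⟩
    rwa [show ((b.val : ℤ) - a.val) = -((a.val : ℤ) - b.val) by ring, Int.neg_gcd]
  loopless := by constructor; rintro a ⟨h, -⟩; exact h rfl

/-- The distance matrix of a graph. -/
noncomputable def distMatrix {V : Type} [Fintype V] (G : SimpleGraph V) : Matrix V V ℝ :=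
  Matrix.of fun i j => (G.dist i j : ℝ)

/-- The distance energy: the sum of the absolute values of the eigenvalues (with multiplicity)
of the distance matrix, i.e. of the roots of its characteristic polynomial. -/
noncomputable def distEnergy {V : Type} [Fintype V] [DecidableEq V] (G : SimpleGraph V) : ℝ :=
  ((distMatrix G).charpoly.roots.map fun x => |x|).sum

/-!
Multiplication by a unit `u` of `ZMod n` preserves `gcd(x, n)`, hence also `gcd(a - b, n)`, so it
is an automorphism of `ICG_n(D)` fixing `0`. Every `a` with `gcd(a, n) = d` is `u * d` for some
unit `u`, so the units act transitively on each class `G_n(d)`, and graph distance from `0` is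
constant on it.
-/

namespace SimpleGraph

variable {V W : Type*} {G : SimpleGraph V} {H : SimpleGraph W}

theorem Hom.edist_le (f : G →g H) (u v : V) : H.edist (f u) (f v) ≤ G.edist u v := by
  by_cases huv : G.Reachable u v
  · obtain ⟨w, hw⟩ := huv.exists_walk_length_eq_edist
    exact hw ▸ (w.length_map f).symm ▸ SimpleGraph.edist_le (w.map f)
  · rw [edist_eq_top_of_not_reachable huv]
    exact le_top

theorem Iso.edist_eq (f : G ≃g H) (u v : V) : H.edist (f u) (f v) = G.edist u v :=
  le_antisymm (f.toHom.edist_le u v) <| by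
    simpa using f.symm.toHom.edist_le (f u) (f v)

theorem Iso.dist_eq (f : G ≃g H) (u v : V) : H.dist (f u) (f v) = G.dist u v := by
  rw [dist, dist, f.edist_eq]

end SimpleGraph

namespace ZMod

variable {n : ℕ}

theorem gcd_val_unit_mul (u : (ZMod n)ˣ) (z : ZMod n) :
    (↑u * z).val.gcd n = z.val.gcd n := by
  rw [val_mul, ← Nat.gcd_rec, Nat.gcd_comm,
    (val_coe_unit_coprime u).gcd_mul_left_cancel]

theorem gcd_val_natCast_of_dvd {d : ℕ} (hd : d ∣ n) : (d : ZMod n).val.gcd n = d := by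
  rw [val_natCast, ← Nat.gcd_rec, Nat.gcd_comm, Nat.gcd_eq_left hd]

theorem exists_unit_mul_eq_of_gcd_val_eq {a b : ZMod n} (h : a.val.gcd n = b.val.gcd n) :
    ∃ u : (ZMod n)ˣ, ↑u * a = b := by
  obtain ⟨d, hd, u, hu, rfl⟩ := eq_unit_mul_divisor a
  obtain ⟨e, he, v, hv, rfl⟩ := eq_unit_mul_divisor b
  lift u to (ZMod n)ˣ using hu
  lift v to (ZMod n)ˣ using hv
  have hde : d = e := by
    simpa only [gcd_val_unit_mul, gcd_val_natCast_of_dvd hd, gcd_val_natCast_of_dvd he] using h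
  exact ⟨v * u⁻¹, by rw [hde, Units.val_mul, mul_assoc, Units.inv_mul_cancel_left]⟩

end ZMod

namespace ICG

variable {n : ℕ} [NeZero n] {D : Finset ℕ}

theorem adj_iff {a b : ZMod n} : (ICG n D).Adj a b ↔ a ≠ b ∧ (a - b).val.gcd n ∈ D := by
  have : ((a.val : ℤ) - b.val).gcd n = (a - b).val.gcd n := by
    rw [← Int.gcd_emod, ← ZMod.val_intCast, ← Int.gcd_natCast_natCast]
    push_cast [ZMod.natCast_val, ZMod.intCast_cast, ZMod.cast_id']
    rfl
  simp only [ICG, this]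

def mulUnitIso (D : Finset ℕ) (u : (ZMod n)ˣ) : ICG n D ≃g ICG n D where
  toEquiv := Units.mulLeft u
  map_rel_iff' := by
    intro a b
    simp only [Units.mulLeft_apply, adj_iff, ne_eq, Units.mul_right_inj, ← mul_sub,
      ZMod.gcd_val_unit_mul]

theorem dist_zero_eq_of_gcd_val_eq {a b : ZMod n} (h : a.val.gcd n = b.val.gcd n) :
    (ICG n D).dist 0 a = (ICG n D).dist 0 b := by
  obtain ⟨u, rfl⟩ := ZMod.exists_unit_mul_eq_of_gcd_val_eq h
  simpa [mulUnitIso] using ((mulUnitIso D u).dist_eq 0 a).symm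

end ICG

theorem distance_layers_of_ICG_general (n : ℕ) [NeZero n] (D : Finset ℕ) :
    (∀ a b : ZMod n, Nat.gcd a.val n = Nat.gcd b.val n →
      (ICG n D).dist 0 a = (ICG n D).dist 0 b) ∧
    (∀ p : ℕ, 1 ≤ p → ∃ S : Set ℕ, (∀ d ∈ S, d ∣ n) ∧
      {v : ZMod n | (ICG n D).dist 0 v = p} =
        ⋃ d ∈ S, {v : ZMod n | v ≠ 0 ∧ Nat.gcd v.val n = d}) := by
  refine ⟨fun a b => ICG.dist_zero_eq_of_gcd_val_eq, fun p hp => ?_⟩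
  refine ⟨(fun v : ZMod n => v.val.gcd n) '' {v | (ICG n D).dist 0 v = p}, ?_, ?_⟩
  · rintro _ ⟨v, -, rfl⟩
    exact Nat.gcd_dvd_right _ _
  · ext v
    simp only [Set.mem_ofPred_eq, Set.mem_iUnion, Set.mem_image, exists_prop]
    constructor
    · intro hv
      have hv0 : v ≠ 0 := by
        rintro rfl
        rw [SimpleGraph.dist_self] at hv
        omega
      exact ⟨_, ⟨v, hv, rfl⟩, hv0, rfl⟩
    · rintro ⟨_, ⟨w, hw, rfl⟩, -, hvw⟩
      rwa [ICG.dist_zero_eq_of_gcd_val_eq hvw]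

/-- in a connected integral circulant graph `ICG_n(D)`, vertices with the same
gcd with `n` are at the same distance from `0`; consequently each distance layer `N_p(0)` is a
union of the sets `G_n(d) = {k : 1 ≤ k < n, gcd(k,n) = d}` over some set of divisors of `n`. -/
theorem distance_layers_of_ICG (n : ℕ) [NeZero n] (hn : 1 < n) (D : Finset ℕ)
    (hD : D.Nonempty) (hdvd : ∀ d ∈ D, d ∣ n ∧ 0 < d ∧ d < n) (hgcd : D.gcd id = 1) :
    (∀ a b : ZMod n, Nat.gcd a.val n = Nat.gcd b.val n →
      (ICG n D).dist 0 a = (ICG n D).dist 0 b) ∧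
    (∀ p : ℕ, 1 ≤ p → ∃ S : Set ℕ, (∀ d ∈ S, d ∣ n) ∧
      {v : ZMod n | (ICG n D).dist 0 v = p} =
        ⋃ d ∈ S, {v : ZMod n | v ≠ 0 ∧ Nat.gcd v.val n = d}) :=
  distance_layers_of_ICG_general n D
end

section
/- Let n = 2^k with k > 1. Then the unitary Cayley graph X_n is the complete bipartite graph with parts the even and the odd residues, its distance matrix has spectrum {3n/2 − 2, n/2 − 2, −2, −2, ..., −2} (with −2 of multiplicity n − 2), and its distance energy is DE(X_n) = 4(n − 2). -/
open scoped Classical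

/-!
For `n = 2 ^ k` an integer is coprime to `n` exactly when it is odd, so `X_n` is the complete
bipartite graph on the parity classes: distinct vertices are at distance `1` across the classes
and `2` within a class. With `v` the `±1` parity vector and `J` the all-ones matrix,
`D + 2 I = (3/2) J + (1/2) v vᵀ = U Λ Uᵀ` for `U = [1 | v]` and `Λ = diag(3/2, 1/2)`.
The columns of `U` are orthogonal of squared length `n`, so `UΛUᵀ` has the spectrum of
`ΛUᵀU = nΛ` padded with `n - 2` zeros, shifted by `-2` in `D`.
-/

namespace SimpleGraph

variable {V β : Type*} {G : SimpleGraph V} {f : V → β}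

theorem dist_eq_two_of_adj_iff_ne (hG : ∀ a b, G.Adj a b ↔ f a ≠ f b) {a b c : V}
    (hab : a ≠ b) (hf : f a = f b) (hc : f c ≠ f a) : G.dist a b = 2 := by
  have hcommon : c ∈ G.commonNeighbors a b := by
    rw [mem_commonNeighbors, hG, hG, ← hf]
    exact ⟨hc.symm, hc.symm⟩
  rw [dist, edist_eq_two_iff.mpr ⟨hab, by rw [hG]; exact not_not.mpr hf, ⟨c, hcommon⟩⟩]
  rfl

theorem dist_of_adj_iff_ne [DecidableEq V] [DecidableEq β]
    (hG : ∀ a b, G.Adj a b ↔ f a ≠ f b) (hf : ∀ a, ∃ c, f c ≠ f a) (a b : V) :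
    G.dist a b = if a = b then 0 else if f a = f b then 2 else 1 := by
  split_ifs with hab hfab
  · rw [hab, dist_self]
  · obtain ⟨c, hc⟩ := hf a
    exact dist_eq_two_of_adj_iff_ne hG hab hfab hc
  · exact dist_eq_one_iff_adj.mpr ((hG a b).mpr hfab)

end SimpleGraph

theorem Int.gcd_two_pow_eq_one_iff {k : ℕ} (hk : 0 < k) (m : ℤ) :
    m.gcd (2 ^ k : ℕ) = 1 ↔ ¬ 2 ∣ m := by
  change Nat.Coprime m.natAbs (2 ^ k) ↔ _
  rw [Nat.coprime_pow_right_iff hk, Nat.coprime_two_right, ← Nat.not_even_iff_odd,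
    Int.natAbs_even, even_iff_two_dvd]

namespace ZMod

variable {n : ℕ}

noncomputable def paritySign (a : ZMod n) : ℝ := if a.val % 2 = 0 then 1 else -1

theorem paritySign_mul_paritySign (a b : ZMod n) :
    paritySign a * paritySign b = if a.val % 2 = b.val % 2 then 1 else -1 := by
  unfold paritySign
  rcases Nat.mod_two_eq_zero_or_one a.val with ha | ha <;>
    rcases Nat.mod_two_eq_zero_or_one b.val with hb | hb <;> simp [ha, hb]

theorem paritySign_mul_self (a : ZMod n) : paritySign a * paritySign a = 1 := by
  simp [paritySign_mul_paritySign]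

variable [NeZero n]

theorem val_add_one_mod_two_ne (hn : 2 ∣ n) (a : ZMod n) :
    (a + 1).val % 2 ≠ a.val % 2 := by
  have h1 : 1 < n := by
    obtain ⟨m, rfl⟩ := hn
    have := NeZero.ne (2 * m)
    omega
  rw [val_add, val_one_eq_one_mod, Nat.mod_eq_of_lt h1, Nat.mod_mod_of_dvd _ hn]
  omega

theorem paritySign_add_one (hn : 2 ∣ n) (a : ZMod n) : paritySign (a + 1) = -paritySign a := by
  have := val_add_one_mod_two_ne hn a
  unfold paritySign
  split_ifs <;> first | omega | norm_num

theorem sum_paritySign (hn : 2 ∣ n) : ∑ a : ZMod n, paritySign a = 0 := by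
  have hshift : ∑ a : ZMod n, paritySign (a + 1) = ∑ a, paritySign a :=
    Equiv.sum_comp (Equiv.addRight 1) paritySign
  simp only [paritySign_add_one hn, Finset.sum_neg_distrib] at hshift
  linarith

end ZMod

theorem ICG_one_adj_iff_of_eq_two_pow {k n : ℕ} [NeZero n] (hk : 0 < k) (hn : n = 2 ^ k)
    (a b : ZMod n) : (ICG n {1}).Adj a b ↔ a.val % 2 ≠ b.val % 2 := by
  subst hn
  simp only [ICG, Finset.mem_singleton]
  rw [Int.gcd_two_pow_eq_one_iff hk, ZMod.val_injective _ |>.ne_iff.symm]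
  omega

theorem ICG_one_dist_of_eq_two_pow {k n : ℕ} [NeZero n] (hk : 0 < k) (hn : n = 2 ^ k)
    (a b : ZMod n) :
    (ICG n {1}).dist a b = if a = b then 0 else if a.val % 2 = b.val % 2 then 2 else 1 :=
  SimpleGraph.dist_of_adj_iff_ne (ICG_one_adj_iff_of_eq_two_pow hk hn)
    (fun a => ⟨a + 1, ZMod.val_add_one_mod_two_ne (hn ▸ dvd_pow_self 2 hk.ne') a⟩) a b

namespace Matrix

open Polynomial

theorem charpoly_mul_diagonal_mul_transpose {R m ι : Type*} [CommRing R] [Fintype m]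
    [DecidableEq m] [Fintype ι] [DecidableEq ι] (U : Matrix m ι R) (d : ι → R) {c : R}
    (hU : Uᵀ * U = c • 1) (hle : Fintype.card ι ≤ Fintype.card m) :
    (U * (diagonal d * Uᵀ)).charpoly =
      X ^ (Fintype.card m - Fintype.card ι) * ∏ i, (X - C (c * d i)) := by
  rw [charpoly_mul_comm_of_le _ _ hle, Matrix.mul_assoc, hU, Matrix.mul_smul, Matrix.mul_one,
    ← diagonal_smul, charpoly_diagonal]
  rfl

end Matrix

open ZMod Matrix

noncomputable def parityFrame (n : ℕ) : Matrix (ZMod n) (Fin 2) ℝ :=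
  Matrix.of fun a => ![1, paritySign a]

theorem parityFrame_transpose_mul_self {n : ℕ} [NeZero n] (hn : 2 ∣ n) :
    (parityFrame n)ᵀ * parityFrame n = (n : ℝ) • 1 := by
  ext s t
  fin_cases s <;> fin_cases t <;>
    simp [parityFrame, Matrix.mul_apply, sum_paritySign hn, paritySign_mul_self, ZMod.card]

theorem distMatrix_ICG_one_of_eq_two_pow {k n : ℕ} [NeZero n] (hk : 0 < k) (hn : n = 2 ^ k) :
    distMatrix (ICG n {1}) =
      parityFrame n * (diagonal ![(3 / 2 : ℝ), 1 / 2] * (parityFrame n)ᵀ) -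
        scalar (ZMod n) 2 := by
  ext a b
  have hentry : (parityFrame n * (diagonal ![(3 / 2 : ℝ), 1 / 2] * (parityFrame n)ᵀ)) a b =
      3 / 2 + paritySign a * paritySign b / 2 := by
    simp [parityFrame, Matrix.mul_apply, Fin.sum_univ_two, div_eq_inv_mul, mul_left_comm]
  rw [Matrix.sub_apply, hentry, paritySign_mul_paritySign, distMatrix, of_apply,
    ICG_one_dist_of_eq_two_pow hk hn, scalar_apply, diagonal_apply]
  split_ifs <;> simp_all <;> norm_num

open Polynomial in
theorem charpoly_distMatrix_ICG_one_of_eq_two_pow {k n : ℕ} [NeZero n] (hk : 0 < k)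
    (hn : n = 2 ^ k) :
    (distMatrix (ICG n {1})).charpoly =
      (X - C (3 * (n : ℝ) / 2 - 2)) * (X - C ((n : ℝ) / 2 - 2)) * (X + C 2) ^ (n - 2) := by
  have hn2 : 2 ≤ n := hn ▸ Nat.le_self_pow hk.ne' 2
  rw [distMatrix_ICG_one_of_eq_two_pow hk hn, charpoly_sub_scalar,
    charpoly_mul_diagonal_mul_transpose _ _
      (parityFrame_transpose_mul_self (hn ▸ dvd_pow_self 2 hk.ne'))
      (by simpa [ZMod.card] using hn2),
    ZMod.card, Fintype.card_fin, Fin.prod_univ_two]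
  simp only [mul_comp, pow_comp, sub_comp, X_comp, C_comp, Matrix.cons_val_zero,
    Matrix.cons_val_one, map_sub]
  rw [show (n : ℝ) * (3 / 2) = 3 * n / 2 by ring, show (n : ℝ) * (1 / 2) = n / 2 by ring]
  ring

open Polynomial in
theorem sum_abs_roots_X_sub_C_mul_X_sub_C_mul_X_add_C_pow (a b c : ℝ) (m : ℕ) :
    (((X - C a) * (X - C b) * (X + C c) ^ m).roots.map fun x => |x|).sum =
      |a| + |b| + m * |c| := by
  have hprod : (X - C a) * (X - C b) * (X + C c) ^ m =
      ((a ::ₘ b ::ₘ Multiset.replicate m (-c)).map fun x => X - C x).prod := by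
    simp [Multiset.prod_replicate, mul_assoc]
  rw [hprod, roots_multiset_prod_X_sub_C]
  simp [add_assoc]

/-- for `n = 2^k`, `k > 1`, the unitary Cayley graph `X_n` is the complete
bipartite graph on the even and odd residues, its distance matrix has spectrum
`{3n/2 - 2, n/2 - 2, -2, …, -2}` (with `-2` of multiplicity `n-2`), and its distance energy
is `4(n-2)`. -/
theorem unitaryCayley_two_power (k : ℕ) (hk : 1 < k) (n : ℕ) [NeZero n] (hn : n = 2 ^ k) :
    (∀ a b : ZMod n, (ICG n {1}).Adj a b ↔ a.val % 2 ≠ b.val % 2) ∧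
    (distMatrix (ICG n {1})).charpoly =
      (Polynomial.X - Polynomial.C (3 * (n : ℝ) / 2 - 2)) *
        (Polynomial.X - Polynomial.C ((n : ℝ) / 2 - 2)) *
        (Polynomial.X + Polynomial.C 2) ^ (n - 2) ∧
    distEnergy (ICG n {1}) = 4 * ((n : ℝ) - 2) := by
  have hk0 : 0 < k := by omega
  have hcharpoly := charpoly_distMatrix_ICG_one_of_eq_two_pow hk0 hn
  refine ⟨ICG_one_adj_iff_of_eq_two_pow hk0 hn, hcharpoly, ?_⟩
  have hn4 : 4 ≤ n := by
    rw [hn]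
    exact Nat.pow_le_pow_right two_pos hk
  have hn4' : (4 : ℝ) ≤ n := by exact_mod_cast hn4
  rw [distEnergy, hcharpoly, sum_abs_roots_X_sub_C_mul_X_sub_C_mul_X_add_C_pow,
    abs_of_nonneg (by linarith), abs_of_nonneg (by linarith), abs_two,
    Nat.cast_sub (by omega)]
  ring
end

section
/- Let n be an odd composite number. Then the unitary Cayley graph X_n has diameter 2, and its distance matrix satisfies D = 2(J − I) − A, where J is the all-ones n×n matrix, I is the identity matrix, and A is the adjacency matrix of X_n. -/
open scoped Classical

/-!
For odd `n` every residue `x` modulo `n` is a sum of two units: modulo an odd prime power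
(a local ring in which `2` is a unit) take `x = 1 + (x - 1)` or `x = 2 + (x - 2)`, and glue by
the Chinese remainder theorem. Writing `a - b = u + v` with units `u, v` gives the walk
`a ~ a - u ~ b`, so `X_n` has diameter at most `2`; when `n` is composite, the vertex
`minFac n` is distinct from and not adjacent to `0`, so the diameter is exactly `2`. In a graph
of diameter at most `2`, the distance between distinct vertices is `1` or `2` according as they
are adjacent or not, which is the matrix identity.
-/

def IsTwoGood (R : Type*) [Semiring R] : Prop :=
  ∀ x : R, ∃ u v : R, IsUnit u ∧ IsUnit v ∧ u + v = x

namespace IsTwoGood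

variable {R S : Type*} [Semiring R] [Semiring S]

theorem of_surjective (hR : IsTwoGood R) (f : R →+* S) (hf : Function.Surjective f) :
    IsTwoGood S := by
  intro y
  obtain ⟨x, rfl⟩ := hf y
  obtain ⟨u, v, hu, hv, rfl⟩ := hR x
  exact ⟨f u, f v, hu.map f, hv.map f, (map_add f u v).symm⟩

theorem prod (hR : IsTwoGood R) (hS : IsTwoGood S) : IsTwoGood (R × S) := by
  rintro ⟨x, y⟩
  obtain ⟨u, v, hu, hv, rfl⟩ := hR x
  obtain ⟨u', v', hu', hv', rfl⟩ := hS y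
  exact ⟨(u, u'), (v, v'), Prod.isUnit_iff.2 ⟨hu, hu'⟩, Prod.isUnit_iff.2 ⟨hv, hv'⟩, rfl⟩

end IsTwoGood

theorem IsLocalRing.isTwoGood {R : Type*} [CommRing R] [IsLocalRing R] (h2 : IsUnit (2 : R)) :
    IsTwoGood R := by
  intro x
  rcases IsLocalRing.isUnit_or_isUnit_one_sub_self (x - 1) with h | h
  · exact ⟨1, x - 1, isUnit_one, h, add_sub_cancel 1 x⟩
  · refine ⟨2, x - 2, h2, ?_, add_sub_cancel 2 x⟩
    rw [show x - 2 = -(1 - (x - 1)) by ring]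
    exact h.neg

namespace ZMod

theorem isUnit_two_of_odd {n : ℕ} (hn : Odd n) : IsUnit (2 : ZMod n) := by
  exact_mod_cast (isUnit_iff_coprime 2 n).2 (Nat.coprime_two_left.2 hn)

theorem isUnit_iff_castHom_ne_zero {p k : ℕ} (hp : p.Prime) (hk : k ≠ 0) (y : ZMod (p ^ k)) :
    IsUnit y ↔ castHom (dvd_pow_self p hk) (ZMod p) y ≠ 0 := by
  have : NeZero (p ^ k) := ⟨pow_ne_zero k hp.ne_zero⟩
  rw [← natCast_zmod_val y, isUnit_natCast_iff_not_dvd_pow hp (Nat.pos_of_ne_zero hk),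
    map_natCast, Ne, natCast_eq_zero_iff]

theorem isLocalRing_prime_pow {p k : ℕ} (hp : p.Prime) (hk : k ≠ 0) :
    IsLocalRing (ZMod (p ^ k)) := by
  have : Nontrivial (ZMod (p ^ k)) := nontrivial_iff.2 (Nat.one_lt_pow hk hp.one_lt).ne'
  refine IsLocalRing.of_isUnit_or_isUnit_one_sub_self fun a => ?_
  have : Fact p.Prime := ⟨hp⟩
  simp only [isUnit_iff_castHom_ne_zero hp hk, map_sub, map_one]
  by_cases ha : castHom (dvd_pow_self p hk) (ZMod p) a = 0
  · exact Or.inr (by simp [ha])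
  · exact Or.inl ha

theorem isTwoGood_of_odd {n : ℕ} (hn : Odd n) : IsTwoGood (ZMod n) := by
  induction n using Nat.recOnPosPrimePosCoprime with
  | zero => exact absurd hn Nat.not_odd_zero
  | one => exact fun x => ⟨x, 0, isUnit_of_subsingleton x, isUnit_of_subsingleton 0, add_zero x⟩
  | prime_pow p k hp hk =>
    have := isLocalRing_prime_pow hp hk.ne'
    exact IsLocalRing.isTwoGood (isUnit_two_of_odd hn)
  | coprime a b _ _ hab iha ihb =>
    obtain ⟨ha, hb⟩ := Nat.odd_mul.1 hn
    exact ((iha ha).prod (ihb hb)).of_surjective (chineseRemainder hab).symm.toRingHom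
      (chineseRemainder hab).symm.surjective

end ZMod

namespace SimpleGraph

variable {V : Type*} {G : SimpleGraph V} {u v : V}

theorem edist_eq_two_of_le_two (h : G.edist u v ≤ 2) (hne : u ≠ v) (hadj : ¬G.Adj u v) :
    G.edist u v = 2 := by
  refine le_antisymm h ?_
  have : 1 < G.edist u v := not_le.1 fun h1 => by
    simp [edist_le_one_iff_adj_or_eq, hadj, hne] at h1
  simpa [one_add_one_eq_two] using Order.add_one_le_of_lt this

theorem diam_eq_two_of_ediam_le_two (h : G.ediam ≤ 2) (hne : u ≠ v) (hadj : ¬G.Adj u v) :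
    G.diam = 2 := by
  have huv := edist_eq_two_of_le_two (edist_le_ediam.trans h) hne hadj
  rw [diam, le_antisymm h (huv ▸ edist_le_ediam)]
  rfl

theorem distMatrix_eq_of_ediam_le_two {V : Type} [Fintype V] [DecidableEq V] {G : SimpleGraph V}
    [DecidableRel G.Adj] (h : G.ediam ≤ 2) :
    distMatrix G = (2 : ℝ) • ((Matrix.of fun _ _ => (1 : ℝ)) - 1) - G.adjMatrix ℝ := by
  ext u v
  simp only [distMatrix, Matrix.of_apply, Matrix.sub_apply, Matrix.smul_apply, Matrix.one_apply,
    adjMatrix_apply, smul_eq_mul]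
  rcases eq_or_ne u v with rfl | hne
  · simp
  by_cases hadj : G.Adj u v
  · norm_num [dist_eq_one_iff_adj.2 hadj, hne, hadj]
  · have : G.dist u v = 2 := by
      rw [dist, edist_eq_two_of_le_two (edist_le_ediam.trans h) hne hadj]; rfl
    simp [this, hne, hadj]

end SimpleGraph

section UnitaryCayley

variable {n : ℕ} [NeZero n]

theorem ICG_one_adj_iff (a b : ZMod n) : (ICG n {1}).Adj a b ↔ a ≠ b ∧ IsUnit (a - b) := by
  have hcast : (((a.val : ℤ) - b.val : ℤ) : ZMod n) = a - b := by simp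
  rw [← hcast, ZMod.coe_int_isUnit_iff_isCoprime, isCoprime_comm, Int.isCoprime_iff_gcd_eq_one]
  simp [ICG]

theorem ICG_one_ediam_le_two (hn : Odd n) : (ICG n {1}).ediam ≤ 2 := by
  refine SimpleGraph.ediam_le_of_edist_le fun a b => ?_
  rcases eq_or_ne a b with rfl | hne
  · simp
  have : Nontrivial (ZMod n) := nontrivial_of_ne a b hne
  obtain ⟨u, v, hu, hv, huv⟩ := ZMod.isTwoGood_of_odd hn (a - b)
  have hau : (ICG n {1}).Adj a (a - u) :=
    (ICG_one_adj_iff _ _).2 ⟨sub_ne_zero.1 (by simpa using hu.ne_zero), by simpa using hu⟩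
  have hub : (ICG n {1}).Adj (a - u) b := by
    have : a - u - b = v := by linear_combination -huv
    exact (ICG_one_adj_iff _ _).2 ⟨sub_ne_zero.1 (this ▸ hv.ne_zero), this ▸ hv⟩
  simpa using (SimpleGraph.Walk.cons hau hub.toWalk).edist_le

theorem ICG_one_exists_ne_not_adj (hn : 1 < n) (hcomp : ¬n.Prime) :
    ∃ a : ZMod n, a ≠ 0 ∧ ¬(ICG n {1}).Adj a 0 := by
  have hp := Nat.minFac_prime hn.ne'
  refine ⟨n.minFac, ?_, fun h => ?_⟩
  · rw [Ne, ZMod.natCast_eq_zero_iff]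
    have hlt := (Nat.not_prime_iff_minFac_lt hn).1 hcomp
    exact fun hdvd => (Nat.le_of_dvd (Nat.minFac_pos n) hdvd).not_gt hlt
  · rw [ICG_one_adj_iff, sub_zero, ZMod.isUnit_prime_iff_not_dvd hp] at h
    exact h.2 (Nat.minFac_dvd n)

end UnitaryCayley

/-- for odd composite `n`, the unitary Cayley graph `X_n` has diameter `2`
and its distance matrix is `D = 2(J - I) - A`, where `J` is the all-ones matrix, `I` the
identity and `A` the adjacency matrix. -/
theorem unitaryCayley_odd_composite_distMatrix (n : ℕ) [NeZero n] (hn : 1 < n)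
    (hodd : Odd n) (hcomp : ¬ n.Prime) :
    (ICG n {1}).diam = 2 ∧
    distMatrix (ICG n {1}) =
      (2 : ℝ) • ((Matrix.of fun _ _ => (1 : ℝ)) - (1 : Matrix (ZMod n) (ZMod n) ℝ)) -
        SimpleGraph.adjMatrix ℝ (ICG n {1}) := by
  have hdiam := ICG_one_ediam_le_two hodd
  obtain ⟨a, hne, hadj⟩ := ICG_one_exists_ne_not_adj hn hcomp
  exact ⟨SimpleGraph.diam_eq_two_of_ediam_le_two hdiam hne hadj,
    SimpleGraph.distMatrix_eq_of_ediam_le_two hdiam⟩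
end

section
/- Let n be an even number having an odd prime divisor. Then the unitary Cayley graph X_n has diameter 3; moreover, the number of vertices at distance 2 from the vertex 0 is exactly n/2 − 1, and the number of vertices at distance 3 from the vertex 0 is exactly n/2 − φ(n). -/
open scoped Classical

/-! Reduction mod 2 sends every unit of `ZMod n` (`n` even) to `1`, so the endpoints of a walk of
length 2 in `X_n` differ by an even residue. Conversely every even residue is a sum of two units:
modulo `p ^ d` a residue is a unit iff it is nonzero mod `p`, so one of `±1` can be split off, and
the Chinese remainder theorem glues the prime powers together. Hence the vertices at distance 2
from `0` are the nonzero even residues, every odd vertex is within distance 3 (step to an even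
neighbour first), and the vertices at distance 3 are the odd non-units, among them any odd prime
divisor of `n`. The counts follow since the even residues form a subgroup of index 2. -/

namespace ZMod

theorem eq_one_iff_ne_zero_mod_two (x : ZMod 2) : x = 1 ↔ x ≠ 0 := by
  revert x; decide

theorem ncard_setOf_isUnit (n : ℕ) [NeZero n] : {v : ZMod n | IsUnit v}.ncard = n.totient := by
  rw [← card_units_eq_totient, ← Nat.card_eq_fintype_card]
  exact Set.ncard_range_of_injective Units.val_injective

theorem isUnit_iff_castHom_ne_zero_of_prime_pow {p d : ℕ} [Fact p.Prime] (hd : d ≠ 0)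
    (x : ZMod (p ^ d)) : IsUnit x ↔ castHom (dvd_pow_self p hd) (ZMod p) x ≠ 0 := by
  have : NeZero (p ^ d) := ⟨pow_ne_zero d (Fact.out : p.Prime).ne_zero⟩
  rw [← natCast_zmod_val x, isUnit_natCast_iff_not_dvd_pow Fact.out (Nat.pos_of_ne_zero hd),
    map_natCast, Ne, natCast_eq_zero_iff]

theorem exists_isUnit_isUnit_sub_of_even {n : ℕ} [NeZero n] {v : ZMod n} (hv : Even v) :
    ∃ u, IsUnit u ∧ IsUnit (v - u) := by
  have hn := NeZero.ne n
  clear ‹NeZero n›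
  induction n using Nat.recOnPosPrimePosCoprime with
  | zero => exact absurd rfl hn
  | one => exact ⟨1, isUnit_one, isUnit_of_subsingleton _⟩
  | prime_pow p d hp hd =>
    have : Fact p.Prime := ⟨hp⟩
    set π := castHom (dvd_pow_self p hd.ne') (ZMod p)
    simp only [isUnit_iff_castHom_ne_zero_of_prime_pow hd.ne', map_sub]
    by_cases hv1 : π v = 1
    · -- `v = r + r` has residue `1`, so `2 ≠ 0` mod `p` and `v + 1` is a unit.
      obtain ⟨r, rfl⟩ := hv
      refine ⟨-1, by rw [map_neg, map_one]; exact neg_ne_zero.mpr one_ne_zero,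
        fun h ↦ one_ne_zero (α := ZMod p) ?_⟩
      rw [map_neg, map_one] at h
      rw [map_add] at hv1 h
      linear_combination -hv1 + π r * (h - hv1)
    · exact ⟨1, by rw [map_one]; exact one_ne_zero, by rwa [map_one, sub_ne_zero]⟩
  | coprime a b ha hb hab iha ihb =>
    let e := chineseRemainder hab
    obtain ⟨u₁, hu₁, hvu₁⟩ := iha (hv.map ((RingHom.fst _ _).comp e.toRingHom)) (by omega)
    obtain ⟨u₂, hu₂, hvu₂⟩ := ihb (hv.map ((RingHom.snd _ _).comp e.toRingHom)) (by omega)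
    refine ⟨e.symm (u₁, u₂), (isUnit_map_iff e.symm _).mpr (Prod.isUnit_iff.mpr ⟨hu₁, hu₂⟩),
      (isUnit_map_iff e _).mp ?_⟩
    rw [map_sub, RingEquiv.apply_symm_apply]
    exact Prod.isUnit_iff.mpr ⟨hvu₁, hvu₂⟩

section Parity

variable {n : ℕ} (heven : 2 ∣ n)

theorem castHom_two_eq_one_of_isUnit {u : ZMod n} (hu : IsUnit u) :
    castHom heven (ZMod 2) u = 1 :=
  (eq_one_iff_ne_zero_mod_two _).mpr (hu.map _).ne_zero

theorem even_of_castHom_two_eq_zero [NeZero n] {v : ZMod n}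
    (hv : castHom heven (ZMod 2) v = 0) : Even v := by
  rw [castHom_apply, cast_eq_val, natCast_eq_zero_iff_even] at hv
  simpa using hv.map (Nat.castRingHom (ZMod n))

theorem ncard_setOf_castHom_two_eq_zero [NeZero n] :
    {v : ZMod n | castHom heven (ZMod 2) v = 0}.ncard = n / 2 := by
  have h := (castHom heven (ZMod 2)).toAddMonoidHom.ker.card_mul_index
  rw [AddSubgroup.index_ker, AddMonoidHom.range_eq_top.mpr (castHom_surjective heven),
    AddSubgroup.card_top, Nat.card_zmod, Nat.card_zmod] at h
  rw [← Nat.card_coe_set_eq]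
  change Nat.card (castHom heven (ZMod 2)).toAddMonoidHom.ker = n / 2
  omega

end Parity

end ZMod

section UnitaryCayley

open SimpleGraph ZMod

variable {n : ℕ} [NeZero n] [Nontrivial (ZMod n)]

theorem icg_one_adj_iff {a b : ZMod n} : (ICG n {1}).Adj a b ↔ IsUnit (a - b) := by
  have hcast : (((a.val : ℤ) - b.val : ℤ) : ZMod n) = a - b := by
    push_cast
    rw [natCast_zmod_val, natCast_zmod_val]
  change a ≠ b ∧ Int.gcd _ _ ∈ ({1} : Finset ℕ) ↔ _
  rw [Finset.mem_singleton, Int.gcd_comm, ← Int.isCoprime_iff_gcd_eq_one,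
    ← coe_int_isUnit_iff_isCoprime, hcast]
  exact ⟨And.right, fun h ↦ ⟨sub_ne_zero.mp h.ne_zero, h⟩⟩

theorem icg_one_commonNeighbors_nonempty_iff (heven : 2 ∣ n) {a b : ZMod n} :
    ((ICG n {1}).commonNeighbors a b).Nonempty ↔ castHom heven (ZMod 2) (a - b) = 0 := by
  simp only [Set.Nonempty, mem_commonNeighbors, icg_one_adj_iff]
  constructor
  · rintro ⟨m, ham, hbm⟩
    rw [show a - b = (a - m) - (b - m) by ring, map_sub, castHom_two_eq_one_of_isUnit heven ham,
      castHom_two_eq_one_of_isUnit heven hbm, sub_self]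
  · intro h
    obtain ⟨u, hu, hu'⟩ := exists_isUnit_isUnit_sub_of_even (even_of_castHom_two_eq_zero heven h)
    refine ⟨a - u, by rwa [sub_sub_cancel], ?_⟩
    rw [show b - (a - u) = -(a - b - u) by ring]
    exact hu'.neg

theorem icg_one_edist_le_two (heven : 2 ∣ n) {a b : ZMod n}
    (h : castHom heven (ZMod 2) (a - b) = 0) :
    (ICG n {1}).edist a b ≤ 2 := by
  obtain ⟨m, ham, hbm⟩ := (icg_one_commonNeighbors_nonempty_iff heven).mpr h
  calc (ICG n {1}).edist a b ≤ (ICG n {1}).edist a m + (ICG n {1}).edist m b :=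
        SimpleGraph.edist_triangle
    _ = 2 := by rw [edist_eq_one_iff_adj.mpr ham, edist_eq_one_iff_adj.mpr hbm.symm]; rfl

theorem icg_one_edist_le_three (heven : 2 ∣ n) (a b : ZMod n) : (ICG n {1}).edist a b ≤ 3 := by
  by_cases h : castHom heven (ZMod 2) (a - b) = 0
  · exact (icg_one_edist_le_two heven h).trans (by norm_num)
  have hodd : castHom heven (ZMod 2) (a - (b + 1)) = 0 := by
    rw [show a - (b + 1) = a - b - 1 by ring, map_sub, map_one,
      (eq_one_iff_ne_zero_mod_two _).mpr h, sub_self]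
  have hadj : (ICG n {1}).Adj (b + 1) b := icg_one_adj_iff.mpr (by simp)
  calc (ICG n {1}).edist a b ≤ (ICG n {1}).edist a (b + 1) + (ICG n {1}).edist (b + 1) b :=
        SimpleGraph.edist_triangle
    _ ≤ 2 + 1 := add_le_add (icg_one_edist_le_two heven hodd) (edist_eq_one_iff_adj.mpr hadj).le
    _ = 3 := rfl

theorem icg_one_dist_zero_eq_two_iff (heven : 2 ∣ n) {v : ZMod n} :
    (ICG n {1}).dist 0 v = 2 ↔ v ≠ 0 ∧ castHom heven (ZMod 2) v = 0 := by
  rw [SimpleGraph.dist, ENat.toNat_eq_iff two_ne_zero, Nat.cast_ofNat, edist_eq_two_iff,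
    icg_one_commonNeighbors_nonempty_iff heven, icg_one_adj_iff, zero_sub, map_neg, neg_eq_zero,
    IsUnit.neg_iff, ne_comm]
  constructor
  · exact fun ⟨hv, _, h⟩ ↦ ⟨hv, h⟩
  · exact fun ⟨hv, h⟩ ↦
      ⟨hv, fun hu ↦ one_ne_zero ((castHom_two_eq_one_of_isUnit heven hu).symm.trans h), h⟩

theorem icg_one_dist_zero_eq_three_iff (heven : 2 ∣ n) {v : ZMod n} :
    (ICG n {1}).dist 0 v = 3 ↔ castHom heven (ZMod 2) v = 1 ∧ ¬IsUnit v := by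
  have h3 : (ICG n {1}).edist 0 v = 3 ↔ 2 < (ICG n {1}).edist 0 v :=
    ⟨fun h ↦ by rw [h]; norm_num,
      fun h ↦ (icg_one_edist_le_three heven 0 v).antisymm ((ENat.add_one_le_iff (by simp)).mpr h)⟩
  rw [SimpleGraph.dist, ENat.toNat_eq_iff three_ne_zero, Nat.cast_ofNat, h3, two_lt_edist_iff,
    ← Set.not_nonempty_iff_eq_empty, icg_one_commonNeighbors_nonempty_iff heven, icg_one_adj_iff,
    zero_sub, map_neg, neg_eq_zero, IsUnit.neg_iff, eq_one_iff_ne_zero_mod_two]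
  constructor
  · exact fun ⟨_, hu, h⟩ ↦ ⟨h, hu⟩
  · exact fun ⟨h, hu⟩ ↦ ⟨fun hv ↦ h (hv ▸ map_zero _), hu, h⟩

theorem icg_one_ncard_dist_zero_eq_two (heven : 2 ∣ n) :
    {v : ZMod n | (ICG n {1}).dist 0 v = 2}.ncard = n / 2 - 1 := by
  have hset : {v : ZMod n | (ICG n {1}).dist 0 v = 2} =
      {v | castHom heven (ZMod 2) v = 0} \ {0} := by
    ext v
    exact (icg_one_dist_zero_eq_two_iff heven).trans and_comm
  rw [hset, Set.ncard_sdiff_singleton_of_mem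
      (show (0 : ZMod n) ∈ {v | castHom heven (ZMod 2) v = 0} from map_zero _),
    ncard_setOf_castHom_two_eq_zero]

theorem icg_one_ncard_dist_zero_eq_three (heven : 2 ∣ n) :
    {v : ZMod n | (ICG n {1}).dist 0 v = 3}.ncard = n / 2 - n.totient := by
  have hset : {v : ZMod n | (ICG n {1}).dist 0 v = 3} =
      {v | castHom heven (ZMod 2) v = 0}ᶜ \ {v | IsUnit v} := by
    ext v
    exact (icg_one_dist_zero_eq_three_iff heven).trans
      (and_congr_left' (eq_one_iff_ne_zero_mod_two _))
  have hunits : {v : ZMod n | IsUnit v} ⊆ {v | castHom heven (ZMod 2) v = 0}ᶜ :=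
    fun v hv h ↦ one_ne_zero ((castHom_two_eq_one_of_isUnit heven hv).symm.trans h)
  rw [hset, Set.ncard_sdiff hunits, Set.ncard_compl, ncard_setOf_castHom_two_eq_zero,
    ncard_setOf_isUnit, Nat.card_zmod]
  omega

end UnitaryCayley

/-- for even `n` with an odd prime divisor, the unitary Cayley graph `X_n` has
diameter `3`, there are exactly `n/2 - 1` vertices at distance `2` from `0`, and exactly
`n/2 - φ(n)` vertices at distance `3` from `0`. -/
theorem unitaryCayley_even_diameter_three (n : ℕ) [NeZero n] (heven : 2 ∣ n)
    (hodd : ∃ p : ℕ, p.Prime ∧ Odd p ∧ p ∣ n) :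
    (ICG n {1}).diam = 3 ∧
    {v : ZMod n | (ICG n {1}).dist 0 v = 2}.ncard = n / 2 - 1 ∧
    {v : ZMod n | (ICG n {1}).dist 0 v = 3}.ncard = n / 2 - Nat.totient n := by
  obtain ⟨p, hp, hp_odd, hpn⟩ := hodd
  have : Nontrivial (ZMod n) := ZMod.nontrivial_iff.mpr (by rintro rfl; omega)
  have hp_far : (ICG n {1}).dist 0 p = 3 :=
    (icg_one_dist_zero_eq_three_iff heven).mpr ⟨by rwa [map_natCast, ZMod.natCast_eq_one_iff_odd],
      by rwa [ZMod.isUnit_prime_iff_not_dvd hp, not_not]⟩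
  have hediam : (ICG n {1}).ediam = 3 := by
    refine (SimpleGraph.ediam_le_of_edist_le (icg_one_edist_le_three heven)).antisymm ?_
    calc (3 : ℕ∞) = (ICG n {1}).edist 0 p := ((ENat.toNat_eq_iff three_ne_zero).mp hp_far).symm
      _ ≤ (ICG n {1}).ediam := SimpleGraph.edist_le_ediam
  exact ⟨by rw [SimpleGraph.diam, hediam]; rfl, icg_one_ncard_dist_zero_eq_two heven,
    icg_one_ncard_dist_zero_eq_three heven⟩
end

section
/- Let n be an even number having an odd prime divisor, with distinct prime factors p_1 = 2, p_2, ..., p_k, and let m be the maximal square-free divisor of n. Then Σ_{i=0}^{n−1} |c(i, n) + 1| = n − m + φ(n) · 2^k, where c(i, n) = μ(n/gcd(i, n)) · φ(n)/φ(n/gcd(i, n)) is the Ramanujan sum (with c(0, n) = φ(n)). -/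
open scoped Classical

/-! Grouping `i` by `d = n / gcd(i, n)`, which takes each divisor `d` of `n` exactly `φ(d)` times,
turns the sum into `∑_{d ∣ n} |μ(d) φ(n) + φ(d)|`. A non-squarefree `d` contributes `φ(d)`, a
squarefree one `φ(n) + μ(d) φ(d)` because `φ(d) ≤ φ(n)`. Over the squarefree divisors, which
correspond to the sets of prime factors of `n`, we have `∑ 1 = 2^k`, `∑ φ(d) = ∏ (1 + (p - 1)) = m`
and `∑ μ(d) φ(d) = ∏ (2 - p) = 0` since `2 ∣ n`; with `∑_{d ∣ n} φ(d) = n` this is the formula. -/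

open Finset
open scoped Nat ArithmeticFunction.Moebius

theorem mul_abs_div_add_one {K : Type*} [Field K] [LinearOrder K] [IsStrictOrderedRing K] {c : K}
    (hc : 0 < c) (x : K) : c * |x / c + 1| = |x + c| := by
  rw [← abs_of_pos hc, ← abs_mul, abs_of_pos hc, mul_add, mul_div_cancel₀ x hc.ne', mul_one]

namespace ArithmeticFunction

def totient : ArithmeticFunction ℕ := ⟨Nat.totient, Nat.totient_zero⟩

@[simp]
theorem totient_apply (n : ℕ) : totient n = φ n := rfl

theorem isMultiplicative_totient : totient.IsMultiplicative :=
  ⟨Nat.totient_one, Nat.totient_mul⟩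

theorem abs_moebius_mul_add_of_squarefree {d : ℕ} (hd : Squarefree d) {a b : ℝ} (hb : 0 ≤ b)
    (hba : b ≤ a) : |(μ d : ℝ) * a + b| = a + μ d * b := by
  rcases (abs_eq zero_le_one).mp (abs_moebius_eq_one_of_squarefree hd) with h | h <;>
    simp only [h, Int.cast_one, Int.cast_neg, one_mul, neg_one_mul]
  · exact abs_of_nonneg (by linarith)
  · rw [abs_of_nonpos (by linarith)]
    ring

end ArithmeticFunction

open ArithmeticFunction

namespace Nat

theorem sum_range_div_gcd {M : Type*} [AddCommMonoid M] (n : ℕ) (g : ℕ → M) :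
    ∑ i ∈ range n, g (n / i.gcd n) = ∑ d ∈ n.divisors, φ d • g d := by
  rcases n.eq_zero_or_pos with rfl | hn
  · simp
  have hmaps : ∀ i ∈ range n, i.gcd n ∈ n.divisors :=
    fun i _ ↦ mem_divisors.mpr ⟨gcd_dvd_right i n, hn.ne'⟩
  rw [← sum_fiberwise_of_maps_to hmaps, ← sum_div_divisors n fun d ↦ φ d • g d]
  refine sum_congr rfl fun d hd ↦ ?_
  rw [sum_congr rfl fun i hi ↦ by rw [(mem_filter.mp hi).2], sum_const,
    totient_div_of_dvd (dvd_of_mem_divisors hd)]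
  simp only [Nat.gcd_comm n]

theorem sum_divisors_filter_squarefree_eq_prod_one_add {R : Type*} [CommSemiring R]
    {f : ArithmeticFunction R} (hf : f.IsMultiplicative) {n : ℕ} (hn : n ≠ 0) :
    ∑ d ∈ n.divisors with Squarefree d, f d = ∏ p ∈ n.primeFactors, (1 + f p) := by
  rw [sum_divisors_filter_squarefree hn, prod_one_add, factors_eq]
  refine sum_congr rfl fun t ht ↦ ?_
  rw [t.prod_val]
  exact hf.map_prod_of_subset_primeFactors n t (mem_powerset.mp ht)

theorem card_divisors_filter_squarefree {n : ℕ} (hn : n ≠ 0) :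
    #{d ∈ n.divisors | Squarefree d} = 2 ^ #n.primeFactors := by
  rw [card_eq_sum_ones, sum_divisors_filter_squarefree hn, sum_const, card_powerset, smul_eq_mul,
    mul_one, factors_eq]
  rfl

theorem sum_divisors_filter_squarefree_totient {n : ℕ} (hn : n ≠ 0) :
    ∑ d ∈ n.divisors with Squarefree d, φ d = ∏ p ∈ n.primeFactors, p := by
  have h := sum_divisors_filter_squarefree_eq_prod_one_add isMultiplicative_totient hn
  simp only [totient_apply] at h
  rw [h]
  refine prod_congr rfl fun p hp ↦ ?_
  have hp := prime_of_mem_primeFactors hp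
  rw [totient_prime hp]
  have := hp.one_lt
  omega

theorem sum_divisors_filter_squarefree_moebius_mul_totient_eq_zero {n : ℕ} (hn : n ≠ 0)
    (heven : 2 ∣ n) : ∑ d ∈ n.divisors with Squarefree d, μ d * (φ d : ℤ) = 0 := by
  have h := sum_divisors_filter_squarefree_eq_prod_one_add
    (isMultiplicative_moebius.pmul isMultiplicative_totient.natCast) hn
  simp only [pmul_apply, natCoe_apply, totient_apply] at h
  rw [h]
  apply prod_eq_zero (mem_primeFactors.mpr ⟨prime_two, heven, hn⟩)
  simp [moebius_apply_prime prime_two]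

theorem sum_divisors_abs_moebius_mul_totient_add_totient {n : ℕ} (hn : 0 < n) (heven : 2 ∣ n) :
    ∑ d ∈ n.divisors, |(μ d : ℝ) * φ n + φ d| =
      n - ((∏ p ∈ n.primeFactors, p : ℕ) : ℝ) + φ n * 2 ^ #n.primeFactors := by
  have hnonsq : ∑ d ∈ n.divisors with ¬Squarefree d, (φ d : ℝ) =
      n - ((∏ p ∈ n.primeFactors, p : ℕ) : ℝ) := by
    rw [eq_sub_iff_add_eq', ← sum_divisors_filter_squarefree_totient hn.ne']
    exact_mod_cast (sum_filter_add_sum_filter_not _ _ _).trans (sum_totient n)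
  have hmoebius : ∑ d ∈ n.divisors with Squarefree d, (μ d : ℝ) * φ d = 0 := by
    exact_mod_cast sum_divisors_filter_squarefree_moebius_mul_totient_eq_zero hn.ne' heven
  calc _ = ∑ d ∈ n.divisors with Squarefree d, ((φ n : ℝ) + μ d * φ d) +
          ∑ d ∈ n.divisors with ¬Squarefree d, (φ d : ℝ) := by
        rw [← sum_filter_add_sum_filter_not _ Squarefree]
        congr 1 <;> refine sum_congr rfl fun d hd ↦ ?_ <;> obtain ⟨hd, hsq⟩ := mem_filter.mp hd
        · have hle : φ d ≤ φ n :=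
            le_of_dvd (totient_pos.mpr hn) (totient_dvd_of_dvd (dvd_of_mem_divisors hd))
          exact abs_moebius_mul_add_of_squarefree hsq (cast_nonneg _) (by exact_mod_cast hle)
        · rw [moebius_eq_zero_of_not_squarefree hsq, Int.cast_zero, zero_mul, zero_add, abs_cast]
    _ = _ := by
        rw [sum_add_distrib, sum_const, card_divisors_filter_squarefree hn.ne', nsmul_eq_mul,
          hnonsq, hmoebius]
        push_cast
        ring

end Nat

theorem ramanujan_sum_abs_plus_one_general (n : ℕ) (hn : 0 < n) (heven : 2 ∣ n) :
    ∑ i ∈ Finset.range n,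
        |(ArithmeticFunction.moebius (n / Nat.gcd i n) : ℝ) * (Nat.totient n : ℝ) /
            (Nat.totient (n / Nat.gcd i n) : ℝ) + 1| =
      (n : ℝ) - ((∏ p ∈ n.primeFactors, p : ℕ) : ℝ) +
        (Nat.totient n : ℝ) * 2 ^ n.primeFactors.card := by
  rw [Nat.sum_range_div_gcd n fun d ↦ |(μ d : ℝ) * φ n / φ d + 1|,
    ← Nat.sum_divisors_abs_moebius_mul_totient_add_totient hn heven]
  refine sum_congr rfl fun d hd ↦ ?_
  have hd : 0 < φ d := Nat.totient_pos.mpr (Nat.pos_of_mem_divisors hd)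
  rw [nsmul_eq_mul, mul_abs_div_add_one (by exact_mod_cast hd)]

/-- for even `n` with an odd prime divisor, with `k` distinct prime factors and
maximal square-free divisor `m`, `∑_{i=0}^{n-1} |c(i,n) + 1| = n - m + φ(n)·2^k`, where
`c(i,n) = μ(n/gcd(i,n))·φ(n)/φ(n/gcd(i,n))` is the Ramanujan sum (and `c(0,n) = φ(n)`). -/
theorem ramanujan_sum_abs_plus_one (n : ℕ) (hn : 0 < n) (heven : 2 ∣ n)
    (hodd : ∃ p : ℕ, p.Prime ∧ Odd p ∧ p ∣ n) :
    ∑ i ∈ Finset.range n,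
        |(ArithmeticFunction.moebius (n / Nat.gcd i n) : ℝ) * (Nat.totient n : ℝ) /
            (Nat.totient (n / Nat.gcd i n) : ℝ) + 1| =
      (n : ℝ) - ((∏ p ∈ n.primeFactors, p : ℕ) : ℝ) +
        (Nat.totient n : ℝ) * 2 ^ n.primeFactors.card :=
  ramanujan_sum_abs_plus_one_general n hn heven
end

section
/- Let p > 3 be a prime and n = 3p. Then the graphs ICG_n({1}) and ICG_n({1, p}) are distance equienergetic but not distance cospectral: DE(ICG_n({1})) = DE(ICG_n({1, p})) = 12(p − 1), the spectra of their distance matrices are distinct, and ICG_n({1}) is a subgraph of ICG_n({1, p}). -/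
open scoped Classical

/-!
For `p > 3` prime, `ICG_{3p}({1})` is the unitary Cayley graph `K₃ × K_p` and
`ICG_{3p}({1, p})` is the complete tripartite graph `K_{p,p,p}`. By the Chinese remainder theorem
any two vertices have a common neighbour in the first (hence in the second) graph, so both have
diameter two and their distance matrices are circulant, with symbols
`1 + [3 ∣ t] + [p ∣ t] - 3 [t = 0]` and `1 + [3 ∣ t] - 2 [t = 0]`.
The discrete Fourier transform diagonalises circulant matrices, and on `ℤ/deℤ` it sends the
indicator of the multiples of `d` to `e` times the indicator of the multiples of `e`. This gives
the distance spectra `{4p, (p - 3)², 0^(p - 1), (-3)^(2p - 2)}` and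
`{4p - 2, (p - 2)², (-2)^(3p - 3)}`: both have absolute sum `12(p - 1)`, and only the first
contains `4p`.
-/

open Polynomial Finset Matrix
open scoped ZMod

theorem ICG_adj_iff (n : ℕ) [NeZero n] (D : Finset ℕ) (a b : ZMod n) :
    (ICG n D).Adj a b ↔ a ≠ b ∧ Nat.gcd (a - b).val n ∈ D := by
  have h : ((a - b).val : ℤ) = ((a.val : ℤ) - b.val) % n := by
    rw [← ZMod.val_intCast]
    simp
  show _ ∧ _ ↔ _
  rw [← Int.gcd_emod, ← h, Int.gcd_natCast_natCast]

theorem ICG_mono (n : ℕ) {D D' : Finset ℕ} (h : D ⊆ D') : ICG n D ≤ ICG n D' :=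
  fun _ _ hab => ⟨hab.1, h hab.2⟩

theorem SimpleGraph.dist_eq_ite_of_adj_of_adj {V : Type} {G : SimpleGraph V} {u v w : V}
    (hu : G.Adj u w) (hv : G.Adj w v) :
    G.dist u v = if u = v then 0 else if G.Adj u v then 1 else 2 := by
  split_ifs with huv hadj
  · simp [huv]
  · exact dist_eq_one_iff_adj.mpr hadj
  · have hle : G.dist u v ≤ 2 := (dist_le (hu.toWalk.append hv.toWalk)).trans (by simp)
    have h0 : G.dist u v ≠ 0 := fun h =>
      huv <| (Reachable.dist_eq_zero_iff ⟨hu.toWalk.append hv.toWalk⟩).mp h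
    have h1 : G.dist u v ≠ 1 := fun h => hadj (dist_eq_one_iff_adj.mp h)
    omega

theorem distMatrix_eq_circulant {V : Type} [Fintype V] [AddGroup V] {G : SimpleGraph V}
    (P : V → Prop) (hadj : ∀ u v, G.Adj u v ↔ P (u - v))
    (hnbr : ∀ u v, ∃ w, G.Adj u w ∧ G.Adj w v) :
    distMatrix G = circulant fun t => if t = 0 then 0 else if P t then 1 else 2 := by
  ext u v
  obtain ⟨w, hu, hv⟩ := hnbr u v
  simp only [distMatrix, of_apply, circulant_apply, sub_eq_zero, hadj,
    SimpleGraph.dist_eq_ite_of_adj_of_adj hu hv]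
  split_ifs <;> simp

theorem Polynomial.roots_prod_X_sub_C_univ {ι R : Type*} [Fintype ι] [CommRing R] [IsDomain R]
    (f : ι → R) : (∏ i, (X - C (f i))).roots = univ.val.map f := by
  rw [← roots_multiset_prod_X_sub_C (univ.val.map f), Multiset.map_map]
  rfl

theorem distEnergy_eq_sum_abs {V ι : Type} [Fintype V] [DecidableEq V] [Fintype ι]
    {G : SimpleGraph V} {f : ι → ℝ} (h : (distMatrix G).charpoly = ∏ i, (X - C (f i))) :
    distEnergy G = ∑ i, |f i| := by
  rw [distEnergy, h, roots_prod_X_sub_C_univ, Multiset.map_map]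
  rfl

section Circulant

variable {N : ℕ} [NeZero N]

theorem toMatrix'_dft_apply (j k : ZMod N) :
    LinearMap.toMatrix' (𝓕 : (ZMod N → ℂ) ≃ₗ[ℂ] _).toLinearMap k j
      = ZMod.stdAddChar (-(j * k)) := by
  simp [LinearMap.toMatrix'_apply, ZMod.dft_apply, Pi.single_apply]

theorem toMatrix'_dft_mul_circulant (v : ZMod N → ℂ) :
    LinearMap.toMatrix' (𝓕 : (ZMod N → ℂ) ≃ₗ[ℂ] _).toLinearMap * circulant v
      = diagonal (𝓕 v) * LinearMap.toMatrix' (𝓕 : (ZMod N → ℂ) ≃ₗ[ℂ] _).toLinearMap := by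
  ext k j
  rw [diagonal_mul, mul_apply]
  simp only [toMatrix'_dft_apply, circulant_apply, ZMod.dft_apply, smul_eq_mul]
  rw [Finset.sum_mul, ← Equiv.sum_comp (Equiv.addRight j)]
  refine Finset.sum_congr rfl fun t _ => ?_
  simp only [Equiv.coe_addRight, add_sub_cancel_right, add_mul, neg_add, AddChar.map_add_eq_mul]
  ring

theorem charpoly_circulant (v : ZMod N → ℂ) :
    (circulant v).charpoly = ∏ k, (X - C (𝓕 v k)) := by
  set F := LinearMap.toMatrix' (𝓕 : (ZMod N → ℂ) ≃ₗ[ℂ] _).toLinearMap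
  set G := LinearMap.toMatrix' (𝓕 : (ZMod N → ℂ) ≃ₗ[ℂ] _).symm.toLinearMap
  have hGF : G * F = 1 := by
    rw [← LinearMap.toMatrix'_mul]
    simp [Module.End.mul_eq_comp]
  have hFG : F * G = 1 := by
    rw [← LinearMap.toMatrix'_mul]
    simp [Module.End.mul_eq_comp]
  have hconj : circulant v = G * (diagonal (𝓕 v) * F) := by
    rw [← toMatrix'_dft_mul_circulant, ← Matrix.mul_assoc, hGF, Matrix.one_mul]
  rw [hconj, charpoly_mul_comm, Matrix.mul_assoc, hFG, Matrix.mul_one, charpoly_diagonal]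

theorem charpoly_circulant_ofReal {v μ : ZMod N → ℝ}
    (h : 𝓕 (fun t => (v t : ℂ)) = fun k => (μ k : ℂ)) :
    (circulant v).charpoly = ∏ k, (X - C (μ k)) := by
  apply map_injective (algebraMap ℝ ℂ) (RingHom.injective _)
  rw [← charpoly_map, map_circulant, Polynomial.map_prod]
  simp [charpoly_circulant, h]

end Circulant

theorem Nat.Coprime.mul_dvd_iff {m n a : ℕ} (h : m.Coprime n) : m * n ∣ a ↔ m ∣ a ∧ n ∣ a :=
  ⟨fun h' => ⟨dvd_of_mul_right_dvd h', dvd_of_mul_left_dvd h'⟩,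
    fun h' => h.mul_dvd_of_dvd_of_dvd h'.1 h'.2⟩

theorem ZMod.dvd_val_iff_eq_zero {N : ℕ} [NeZero N] {t : ZMod N} : N ∣ t.val ↔ t = 0 := by
  rw [← ZMod.natCast_eq_zero_iff, ZMod.natCast_zmod_val]

section MultiplesIndicator

variable {N : ℕ}

def multiplesIndicator {R : Type*} [Zero R] [One R] (d : ℕ) (t : ZMod N) : R :=
  if d ∣ t.val then 1 else 0

@[simp, norm_cast]
theorem ofReal_multiplesIndicator (d : ℕ) (t : ZMod N) :
    ((multiplesIndicator d t : ℝ) : ℂ) = multiplesIndicator d t := by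
  unfold multiplesIndicator
  split_ifs <;> simp

@[simp]
theorem multiplesIndicator_one {R : Type*} [Zero R] [One R] (t : ZMod N) :
    (multiplesIndicator 1 t : R) = 1 := by
  simp [multiplesIndicator]

theorem multiplesIndicator_mul {R : Type*} [MulZeroOneClass R] {d d' : ℕ} (h : d.Coprime d')
    (t : ZMod N) :
    (multiplesIndicator (d * d') t : R) = multiplesIndicator d t * multiplesIndicator d' t := by
  unfold multiplesIndicator
  by_cases hd : d ∣ t.val <;> by_cases hd' : d' ∣ t.val <;> simp [h.mul_dvd_iff, hd, hd']

variable [NeZero N] {d e : ℕ}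

theorem filter_dvd_val_eq_image (hde : d * e = N) :
    univ.filter (fun t : ZMod N => d ∣ t.val)
      = (range e).image fun m => ((d * m : ℕ) : ZMod N) := by
  have hd : 0 < d := Nat.pos_of_ne_zero fun h => NeZero.ne N (by rw [← hde, h, zero_mul])
  ext t
  simp only [mem_filter, mem_univ, true_and, mem_image, mem_range]
  constructor
  · rintro ⟨m, hm⟩
    refine ⟨m, ?_, by rw [← hm, ZMod.natCast_zmod_val]⟩
    have : d * m < d * e := hde ▸ hm ▸ t.val_lt
    exact lt_of_mul_lt_mul_left this (Nat.zero_le d)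
  · rintro ⟨m, hm, rfl⟩
    rw [ZMod.val_cast_of_lt (hde ▸ Nat.mul_lt_mul_of_pos_left hm hd)]
    exact dvd_mul_right d m

theorem injOn_natCast_mul (hde : d * e = N) :
    Set.InjOn (fun m => ((d * m : ℕ) : ZMod N)) (range e) := by
  intro a ha b hb hab
  have hd : 0 < d := Nat.pos_of_ne_zero fun h => NeZero.ne N (by rw [← hde, h, zero_mul])
  have hlt : ∀ m ∈ (range e : Set ℕ), d * m < N := fun m hm =>
    hde ▸ Nat.mul_lt_mul_of_pos_left (mem_range.mp hm) hd
  have := congrArg ZMod.val hab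
  simp only [ZMod.val_cast_of_lt (hlt a ha), ZMod.val_cast_of_lt (hlt b hb)] at this
  exact Nat.eq_of_mul_eq_mul_left hd this

/-- Summed over the multiples `d * m` (`m < e`), the character is a geometric progression whose
ratio `ψ(-d k)` equals `1` exactly when `e ∣ k`. -/
theorem dft_multiplesIndicator (hde : d * e = N) :
    𝓕 (multiplesIndicator d : ZMod N → ℂ) = (e : ℂ) • multiplesIndicator e := by
  ext k
  set z : ℂ := ZMod.stdAddChar (-((d : ZMod N) * k)) with hzdef
  have hz : z = 1 ↔ e ∣ k.val := by
    have hd : 0 < d := Nat.pos_of_ne_zero fun h => NeZero.ne N (by rw [← hde, h, zero_mul])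
    rw [hzdef, ← AddChar.map_zero_eq_one (ZMod.stdAddChar (N := N)),
      ZMod.injective_stdAddChar.eq_iff, neg_eq_zero, ← Nat.mul_dvd_mul_iff_left hd, hde]
    conv_lhs => rw [← ZMod.natCast_zmod_val k, ← Nat.cast_mul, ZMod.natCast_eq_zero_iff]
  have hze : z ^ e = 1 := by
    rw [hzdef, ← AddChar.map_nsmul_eq_pow, nsmul_eq_mul, mul_neg, ← mul_assoc, ← Nat.cast_mul,
      Nat.mul_comm, hde, ZMod.natCast_self, zero_mul, neg_zero, AddChar.map_zero_eq_one]
  have hsum : 𝓕 (multiplesIndicator d : ZMod N → ℂ) k = ∑ m ∈ range e, z ^ m := by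
    rw [ZMod.dft_apply]
    simp only [multiplesIndicator, smul_eq_mul, mul_ite, mul_one, mul_zero]
    rw [← Finset.sum_filter, filter_dvd_val_eq_image hde, sum_image (injOn_natCast_mul hde)]
    refine Finset.sum_congr rfl fun m _ => ?_
    rw [hzdef, ← AddChar.map_nsmul_eq_pow]
    congr 1
    push_cast
    ring
  rw [hsum, Pi.smul_apply, smul_eq_mul, multiplesIndicator]
  split_ifs with h
  · simp [hz.mpr h]
  · rw [geom_sum_eq (mt hz.mp h), hze, sub_self, zero_div, mul_zero]

theorem sum_multiplesIndicator (hde : d * e = N) :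
    ∑ t : ZMod N, (multiplesIndicator d t : ℝ) = e := by
  have h := congrFun (dft_multiplesIndicator hde) 0
  rw [ZMod.dft_apply_zero, Pi.smul_apply, smul_eq_mul, multiplesIndicator, if_pos (by simp)] at h
  have : ((∑ t : ZMod N, (multiplesIndicator d t : ℝ) : ℝ) : ℂ) = e := by
    push_cast
    simpa using h
  exact_mod_cast this

end MultiplesIndicator

theorem ZMod.dvd_val_iff_chineseRemainder_fst_eq_zero {m n : ℕ} [NeZero (m * n)]
    (h : m.Coprime n) (t : ZMod (m * n)) : m ∣ t.val ↔ (chineseRemainder h t).1 = 0 := by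
  rw [← ZMod.natCast_eq_zero_iff, ZMod.natCast_val]
  exact (congrArg (· = 0) (Prod.fst_zmod_cast t)).to_iff.symm

theorem ZMod.dvd_val_iff_chineseRemainder_snd_eq_zero {m n : ℕ} [NeZero (m * n)]
    (h : m.Coprime n) (t : ZMod (m * n)) : n ∣ t.val ↔ (chineseRemainder h t).2 = 0 := by
  rw [← ZMod.natCast_eq_zero_iff, ZMod.natCast_val]
  exact (congrArg (· = 0) (Prod.snd_zmod_cast t)).to_iff.symm

theorem Fintype.exists_ne_ne_of_two_lt_card {α : Type*} [Fintype α] [DecidableEq α]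
    (h : 2 < Fintype.card α) (a b : α) : ∃ x, x ≠ a ∧ x ≠ b := by
  obtain ⟨x, -, hx⟩ := Finset.exists_mem_notMem_of_card_lt_card (s := {a, b}) (t := univ)
    (card_le_two.trans_lt h)
  exact ⟨x, by simpa [not_or] using hx⟩

theorem Nat.gcd_eq_ite_of_prime {q : ℕ} (hq : q.Prime) (v : ℕ) :
    Nat.gcd v q = if q ∣ v then q else 1 := by
  split_ifs with h
  · exact Nat.gcd_eq_right h
  · exact Nat.Coprime.symm ((Nat.Prime.coprime_iff_not_dvd hq).mpr h)

theorem Nat.coprime_three_of_prime {p : ℕ} (hp : p.Prime) (hp3 : 3 < p) : Nat.Coprime 3 p :=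
  (Nat.coprime_primes Nat.prime_three hp).mpr hp3.ne

theorem Nat.gcd_three_mul_eq_ite {p : ℕ} (hp : p.Prime) (hp3 : 3 < p) (v : ℕ) :
    Nat.gcd v (3 * p) = (if 3 ∣ v then 3 else 1) * (if p ∣ v then p else 1) := by
  rw [(Nat.coprime_three_of_prime hp hp3).gcd_mul, Nat.gcd_eq_ite_of_prime Nat.prime_three,
    Nat.gcd_eq_ite_of_prime hp]

def unitaryEigenvalue (p : ℕ) (k : ZMod (3 * p)) : ℝ :=
  3 * p * multiplesIndicator (3 * p) k + p * multiplesIndicator p k + 3 * multiplesIndicator 3 k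
    - 3

def tripartiteEigenvalue (p : ℕ) (k : ZMod (3 * p)) : ℝ :=
  3 * p * multiplesIndicator (3 * p) k + p * multiplesIndicator p k - 2

theorem unitaryEigenvalue_zero (p : ℕ) : unitaryEigenvalue p 0 = 4 * p := by
  simp [unitaryEigenvalue, multiplesIndicator]
  ring

theorem tripartiteEigenvalue_lt {p : ℕ} (k : ZMod (3 * p)) : tripartiteEigenvalue p k < 4 * p := by
  have := Nat.cast_nonneg (α := ℝ) p
  unfold tripartiteEigenvalue multiplesIndicator
  split_ifs <;> linarith

section ThreeMulPrime

variable {p : ℕ} [NeZero (3 * p)]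

theorem ICG_three_mul_one_adj_iff (hp : p.Prime) (hp3 : 3 < p) (a b : ZMod (3 * p)) :
    (ICG (3 * p) {1}).Adj a b ↔ ¬ 3 ∣ (a - b).val ∧ ¬ p ∣ (a - b).val := by
  rw [ICG_adj_iff, Nat.gcd_three_mul_eq_ite hp hp3, ← sub_ne_zero]
  by_cases h3 : 3 ∣ (a - b).val
  · by_cases hpd : p ∣ (a - b).val <;> simp [h3, hpd]
  · have hab : a - b ≠ 0 := fun h => h3 (by simp [h])
    by_cases hpd : p ∣ (a - b).val <;> simp [h3, hpd, hab, hp.ne_one]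

theorem ICG_three_mul_one_p_adj_iff (hp : p.Prime) (hp3 : 3 < p) (a b : ZMod (3 * p)) :
    (ICG (3 * p) {1, p}).Adj a b ↔ ¬ 3 ∣ (a - b).val := by
  rw [ICG_adj_iff, Nat.gcd_three_mul_eq_ite hp hp3, ← sub_ne_zero]
  by_cases h3 : 3 ∣ (a - b).val
  · by_cases hpd : p ∣ (a - b).val <;> simp [h3, hpd] <;> omega
  · have hab : a - b ≠ 0 := fun h => h3 (by simp [h])
    by_cases hpd : p ∣ (a - b).val <;> simp [h3, hpd, hab]

theorem exists_ICG_three_mul_one_adj_adj (hp : p.Prime) (hp3 : 3 < p) (i j : ZMod (3 * p)) :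
    ∃ c, (ICG (3 * p) {1}).Adj i c ∧ (ICG (3 * p) {1}).Adj c j := by
  have hcop := Nat.coprime_three_of_prime hp hp3
  have : NeZero p := ⟨hp.ne_zero⟩
  set e := ZMod.chineseRemainder hcop
  obtain ⟨x, hxi, hxj⟩ := Fintype.exists_ne_ne_of_two_lt_card (by simp) (e i).1 (e j).1
  obtain ⟨y, hyi, hyj⟩ := Fintype.exists_ne_ne_of_two_lt_card (by simp; omega) (e i).2 (e j).2
  refine ⟨e.symm (x, y), ?_, ?_⟩ <;>
    simp only [ICG_three_mul_one_adj_iff hp hp3,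
      ZMod.dvd_val_iff_chineseRemainder_fst_eq_zero hcop,
      ZMod.dvd_val_iff_chineseRemainder_snd_eq_zero hcop, map_sub, RingEquiv.apply_symm_apply,
      Prod.fst_sub, Prod.snd_sub, sub_eq_zero, e] <;> tauto

theorem ZMod.eq_zero_iff_three_dvd_and_dvd (hp : p.Prime) (hp3 : 3 < p) (t : ZMod (3 * p)) :
    t = 0 ↔ 3 ∣ t.val ∧ p ∣ t.val := by
  rw [← ZMod.dvd_val_iff_eq_zero, (Nat.coprime_three_of_prime hp hp3).mul_dvd_iff]

theorem distMatrix_ICG_three_mul_one (hp : p.Prime) (hp3 : 3 < p) :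
    distMatrix (ICG (3 * p) {1}) = circulant fun t => multiplesIndicator 1 t
      + multiplesIndicator 3 t + multiplesIndicator p t - 3 * multiplesIndicator (3 * p) t := by
  rw [distMatrix_eq_circulant (fun t => ¬ 3 ∣ t.val ∧ ¬ p ∣ t.val)
    (ICG_three_mul_one_adj_iff hp hp3) (exists_ICG_three_mul_one_adj_adj hp hp3)]
  congr 1
  ext t
  rw [multiplesIndicator_mul (Nat.coprime_three_of_prime hp hp3),
    ZMod.eq_zero_iff_three_dvd_and_dvd hp hp3]
  unfold multiplesIndicator
  by_cases h3 : 3 ∣ t.val <;> by_cases hpd : p ∣ t.val <;> simp [h3, hpd] <;> norm_num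

theorem distMatrix_ICG_three_mul_one_p (hp : p.Prime) (hp3 : 3 < p) :
    distMatrix (ICG (3 * p) {1, p}) = circulant fun t => multiplesIndicator 1 t
      + multiplesIndicator 3 t - 2 * multiplesIndicator (3 * p) t := by
  rw [distMatrix_eq_circulant (fun t => ¬ 3 ∣ t.val) (ICG_three_mul_one_p_adj_iff hp hp3)
    fun i j => ?_]
  · congr 1
    ext t
    rw [multiplesIndicator_mul (Nat.coprime_three_of_prime hp hp3),
      ZMod.eq_zero_iff_three_dvd_and_dvd hp hp3]
    unfold multiplesIndicator
    by_cases h3 : 3 ∣ t.val <;> by_cases hpd : p ∣ t.val <;> simp [h3, hpd] <;> norm_num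
  · obtain ⟨c, hic, hcj⟩ := exists_ICG_three_mul_one_adj_adj hp hp3 i j
    exact ⟨c, ICG_mono _ (by simp) hic, ICG_mono _ (by simp) hcj⟩

theorem charpoly_distMatrix_ICG_three_mul_one (hp : p.Prime) (hp3 : 3 < p) :
    (distMatrix (ICG (3 * p) {1})).charpoly = ∏ k, (X - C (unitaryEigenvalue p k)) := by
  rw [distMatrix_ICG_three_mul_one hp hp3]
  apply charpoly_circulant_ofReal
  have hv : (fun t : ZMod (3 * p) => ((multiplesIndicator 1 t + multiplesIndicator 3 t
      + multiplesIndicator p t - 3 * multiplesIndicator (3 * p) t : ℝ) : ℂ))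
      = multiplesIndicator 1 + multiplesIndicator 3 + multiplesIndicator p
        - (3 : ℂ) • multiplesIndicator (3 * p) := by
    ext t
    simp
  rw [hv, map_sub, map_add, map_add, map_smul, dft_multiplesIndicator (one_mul _),
    dft_multiplesIndicator rfl, dft_multiplesIndicator (mul_comm p 3),
    dft_multiplesIndicator (mul_one _)]
  ext k
  simp [unitaryEigenvalue]

theorem charpoly_distMatrix_ICG_three_mul_one_p (hp : p.Prime) (hp3 : 3 < p) :
    (distMatrix (ICG (3 * p) {1, p})).charpoly = ∏ k, (X - C (tripartiteEigenvalue p k)) := by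
  rw [distMatrix_ICG_three_mul_one_p hp hp3]
  apply charpoly_circulant_ofReal
  have hv : (fun t : ZMod (3 * p) => ((multiplesIndicator 1 t + multiplesIndicator 3 t
      - 2 * multiplesIndicator (3 * p) t : ℝ) : ℂ))
      = multiplesIndicator 1 + multiplesIndicator 3 - (2 : ℂ) • multiplesIndicator (3 * p) := by
    ext t
    simp
  rw [hv, map_sub, map_add, map_smul, dft_multiplesIndicator (one_mul _),
    dft_multiplesIndicator rfl, dft_multiplesIndicator (mul_one _)]
  ext k
  simp [tripartiteEigenvalue]

theorem sum_abs_unitaryEigenvalue (hp : p.Prime) (hp3 : 3 < p) :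
    ∑ k : ZMod (3 * p), |unitaryEigenvalue p k| = 12 * ((p : ℝ) - 1) := by
  have hp3' : (3 : ℝ) < p := by exact_mod_cast hp3
  have habs : ∀ k : ZMod (3 * p), |unitaryEigenvalue p k| = 3 * multiplesIndicator 1 k
      - 3 * multiplesIndicator 3 k + (p - 6) * multiplesIndicator p k
      + (3 * p + 6) * multiplesIndicator (3 * p) k := by
    intro k
    rw [unitaryEigenvalue, multiplesIndicator_mul (Nat.coprime_three_of_prime hp hp3)]
    unfold multiplesIndicator
    by_cases h3 : 3 ∣ k.val <;> by_cases hpd : p ∣ k.val <;> simp [h3, hpd]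
    all_goals rw [abs_of_nonneg (by linarith)]; ring
  simp only [habs, sum_add_distrib, sum_sub_distrib, ← mul_sum,
    sum_multiplesIndicator (one_mul _), sum_multiplesIndicator (rfl : 3 * p = 3 * p),
    sum_multiplesIndicator (mul_comm p 3), sum_multiplesIndicator (mul_one _)]
  push_cast
  ring

theorem sum_abs_tripartiteEigenvalue (hp : p.Prime) (hp3 : 3 < p) :
    ∑ k : ZMod (3 * p), |tripartiteEigenvalue p k| = 12 * ((p : ℝ) - 1) := by
  have hp3' : (3 : ℝ) < p := by exact_mod_cast hp3
  have habs : ∀ k : ZMod (3 * p), |tripartiteEigenvalue p k| = 2 * multiplesIndicator 1 k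
      + (p - 4) * multiplesIndicator p k + 3 * p * multiplesIndicator (3 * p) k := by
    intro k
    rw [tripartiteEigenvalue, multiplesIndicator_mul (Nat.coprime_three_of_prime hp hp3)]
    unfold multiplesIndicator
    by_cases h3 : 3 ∣ k.val <;> by_cases hpd : p ∣ k.val <;> simp [h3, hpd]
    all_goals rw [abs_of_nonneg (by linarith)]; ring
  simp only [habs, sum_add_distrib, ← mul_sum, sum_multiplesIndicator (one_mul _),
    sum_multiplesIndicator (mul_comm p 3), sum_multiplesIndicator (mul_one _)]
  push_cast
  ring

end ThreeMulPrime

/-- for a prime `p > 3` and `n = 3p`, the graphs `ICG_n({1})` and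
`ICG_n({1, p})` have equal distance energy `12(p-1)`, distinct distance spectra, and
`ICG_n({1})` is a subgraph of `ICG_n({1, p})`. -/
theorem distEquienergetic_ICG_3p (p : ℕ) (hp : p.Prime) (hp3 : 3 < p) (n : ℕ) [NeZero n]
    (hn : n = 3 * p) :
    distEnergy (ICG n {1}) = 12 * ((p : ℝ) - 1) ∧
    distEnergy (ICG n {1, p}) = 12 * ((p : ℝ) - 1) ∧
    (distMatrix (ICG n {1})).charpoly ≠ (distMatrix (ICG n {1, p})).charpoly ∧
    ICG n {1} ≤ ICG n {1, p} := by
  subst hn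
  have h₁ := charpoly_distMatrix_ICG_three_mul_one hp hp3
  have h₂ := charpoly_distMatrix_ICG_three_mul_one_p hp hp3
  refine ⟨(distEnergy_eq_sum_abs h₁).trans (sum_abs_unitaryEigenvalue hp hp3),
    (distEnergy_eq_sum_abs h₂).trans (sum_abs_tripartiteEigenvalue hp hp3), fun h => ?_,
    ICG_mono _ (by simp)⟩
  have h4p : (4 * p : ℝ) ∈ (distMatrix (ICG (3 * p) {1})).charpoly.roots := by
    rw [h₁, roots_prod_X_sub_C_univ]
    exact Multiset.mem_map.mpr ⟨0, mem_univ _, unitaryEigenvalue_zero p⟩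
  rw [h, h₂, roots_prod_X_sub_C_univ] at h4p
  obtain ⟨k, -, hk⟩ := Multiset.mem_map.mp h4p
  exact (tripartiteEigenvalue_lt k).ne hk
end
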